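/- Let $\{\Delta_1, \dots, \Delta_s\}$ be a generalized nef partition of $\Delta$, let $A \subsetneq \{1, \dots, s\}$ be a nonempty proper subset such that $\sum_{i \in A} \Delta_i$ contains the origin in its relative interior, let $V_A$ be the linear span of $\bigcup_{i \in A} \Delta_i$, and let $C_B$ be the cone generated by the vertices of the $\Delta_j$, $j \notin A$. Then $V_A \cap C_B = \{0\}$, and the cone $C_A$ generated by the vertices of the $\Delta_i$, $i \in A$, equals $V_A$. -/

import Mathlib

open scoped RealInnerProductSpace Pointwise

namespace GNPPaper

variable {d s : ℕ}

abbrev E (d : ℕ) := EuclideanSpace ℝ (Fin d)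

/-- Polar with the paper's sign convention `⟨x,y⟩ ≥ -1`. -/
def pol (A : Set (E d)) : Set (E d) := {y | ∀ x ∈ A, (-1 : ℝ) ≤ (inner ℝ x y : ℝ)}

/-- Vertices = extreme points. -/
def Vert (A : Set (E d)) : Set (E d) := Set.extremePoints ℝ A

/-- Indicator function of a set. -/
noncomputable def ind (I : Set (E d)) (v : E d) : ℝ := I.indicator (fun _ => 1) v

/-- The piece `Δ_i` associated to a part `I` of the vertices of the polar of `A`. -/
def pieceD (A : Set (E d)) (I : Set (E d)) : Set (E d) :=
  {m | ∀ v ∈ Vert (pol A), -(ind I v) ≤ (inner ℝ m v : ℝ)}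

def IsPolytope (A : Set (E d)) : Prop :=
  ∃ F : Finset (E d), A = convexHull ℝ (F : Set (E d))

def IsVertPartition (A : Set (E d)) (I : Fin s → Set (E d)) : Prop :=
  (∀ i, I i ⊆ Vert (pol A)) ∧ ∀ v ∈ Vert (pol A), ∃! i, v ∈ I i

/-- `I` induces a generalized nef partition of `A`. -/
def IsGNP (A : Set (E d)) (I : Fin s → Set (E d)) : Prop :=
  IsPolytope A ∧ (0 : E d) ∈ interior A ∧ IsVertPartition A I ∧
    (∑ i, pieceD A (I i)) = A

/-- The dual piece `∇_j`. -/
def pieceN (A : Set (E d)) (I : Fin s → Set (E d)) (j : Fin s) : Set (E d) :=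
  {y | ∀ i : Fin s, ∀ m ∈ pieceD A (I i), -(if i = j then (1:ℝ) else 0) ≤ (inner ℝ m y : ℝ)}

def nab (A : Set (E d)) (I : Fin s → Set (E d)) : Set (E d) := ∑ j, pieceN A I j

/-- A facet: a nonempty proper face of codimension one. -/
def IsFacet (A F : Set (E d)) : Prop :=
  IsExtreme ℝ A F ∧ F.Nonempty ∧ F ≠ A ∧
    Module.finrank ℝ ↥(vectorSpan ℝ F) + 1 = d

/-- Cone of nonnegative real combinations of elements of `S`. -/
def coneOf (S : Set (E d)) : Set (E d) :=
  {x | ∃ (t : Finset (E d)) (c : E d → ℝ), (t : Set (E d)) ⊆ S ∧ (∀ v, 0 ≤ c v) ∧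
      x = ∑ v ∈ t, c v • v}

def IsLatticeSet (S : Set (E d)) : Prop := ∀ v ∈ S, ∀ k : Fin d, ∃ z : ℤ, v k = (z : ℝ)

/-- A full-dimensional simplex. -/
def IsSimplex (S : Set (E d)) : Prop :=
  ∃ F : Finset (E d), S = convexHull ℝ (F : Set (E d)) ∧ F.card = d + 1 ∧
    AffineIndependent ℝ (fun v : F => (v : E d))

/-- Good pair of generalized nef partitions. -/
def IsGoodPair (A1 A2 : Set (E d)) (I1 I2 : Fin s → Set (E d)) : Prop :=
  IsGNP A1 I1 ∧ IsGNP A2 I2 ∧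
  (∀ i, pieceD A1 (I1 i) ⊆ pieceD A2 (I2 i)) ∧
  (∀ i, IsLatticeSet (Vert (pieceD A1 (I1 i)))) ∧
  IsLatticeSet (Vert A1) ∧ IsLatticeSet (Vert (pol A2)) ∧
  (0 : E d) ∈ interior A1 ∧ (0 : E d) ∈ interior (pol A2)


/-! ### cone lemmas -/

lemma coneOf_zero_mem (S : Set (E d)) : (0 : E d) ∈ coneOf S :=
  ⟨∅, fun _ => 0, by simp, fun _ => le_refl 0, by simp⟩

lemma subset_coneOf (S : Set (E d)) : S ⊆ coneOf S := by
  classical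
  intro v hv
  refine ⟨{v}, fun w => if w = v then 1 else 0, by simpa, fun w => ?_, by simp⟩
  · dsimp only; split <;> norm_num

lemma coneOf_add_mem {S : Set (E d)} {x y : E d} (hx : x ∈ coneOf S) (hy : y ∈ coneOf S) :
    x + y ∈ coneOf S := by
  classical
  obtain ⟨t1, c1, ht1, hc1, rfl⟩ := hx
  obtain ⟨t2, c2, ht2, hc2, rfl⟩ := hy
  have h1 : ∑ v ∈ t1 ∪ t2, (if v ∈ t1 then c1 v else 0) • v = ∑ v ∈ t1, c1 v • v := by
    rw [← Finset.sum_subset Finset.subset_union_left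
      (fun v _ hv => by rw [if_neg hv, zero_smul])]
    exact Finset.sum_congr rfl fun v hv => by rw [if_pos hv]
  have h2 : ∑ v ∈ t1 ∪ t2, (if v ∈ t2 then c2 v else 0) • v = ∑ v ∈ t2, c2 v • v := by
    rw [← Finset.sum_subset Finset.subset_union_right
      (fun v _ hv => by rw [if_neg hv, zero_smul])]
    exact Finset.sum_congr rfl fun v hv => by rw [if_pos hv]
  refine ⟨t1 ∪ t2, (fun v => (if v ∈ t1 then c1 v else 0) + (if v ∈ t2 then c2 v else 0)),
    by rw [Finset.coe_union]; exact Set.union_subset ht1 ht2,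
    fun v => add_nonneg (by by_cases h : v ∈ t1 <;> simp [h, hc1 v])
      (by by_cases h : v ∈ t2 <;> simp [h, hc2 v]), ?_⟩
  rw [← h1, ← h2, ← Finset.sum_add_distrib]
  exact Finset.sum_congr rfl (fun v _ => by rw [add_smul])

lemma coneOf_smul_mem {S : Set (E d)} {r : ℝ} (hr : 0 ≤ r) {x : E d} (hx : x ∈ coneOf S) :
    r • x ∈ coneOf S := by
  obtain ⟨t, c, ht, hc, rfl⟩ := hx
  refine ⟨t, fun v => r * c v, ht, fun v => mul_nonneg hr (hc v), ?_⟩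
  rw [Finset.smul_sum]
  exact Finset.sum_congr rfl fun v _ => (smul_smul r (c v) v)

lemma coneOf_convex (S : Set (E d)) : Convex ℝ (coneOf S) :=
  fun _ hx _ hy _ _ ha hb _ => coneOf_add_mem (coneOf_smul_mem ha hx) (coneOf_smul_mem hb hy)

lemma convexHull_subset_coneOf (S : Set (E d)) : convexHull ℝ S ⊆ coneOf S :=
  convexHull_min (subset_coneOf S) (coneOf_convex S)

lemma coneOf_mono {S T : Set (E d)} (h : S ⊆ T) : coneOf S ⊆ coneOf T := by
  rintro x ⟨t, c, ht, hc, rfl⟩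
  exact ⟨t, c, ht.trans h, hc, rfl⟩

lemma coneOf_subset_span {S : Set (E d)} {p : Submodule ℝ (E d)} (h : S ⊆ p) :
    coneOf S ⊆ (p : Set (E d)) := by
  rintro x ⟨t, c, ht, hc, rfl⟩
  exact Submodule.sum_mem p fun v hv => Submodule.smul_mem p _ (h (ht hv))

lemma coneOf_inner_nonneg {S : Set (E d)} {x v : E d} (hx : x ∈ coneOf S)
    (h : ∀ p ∈ S, 0 ≤ (inner ℝ p v : ℝ)) : 0 ≤ (inner ℝ x v : ℝ) := by
  obtain ⟨t, c, ht, hc, rfl⟩ := hx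
  rw [sum_inner]
  refine Finset.sum_nonneg fun w hw => ?_
  rw [real_inner_smul_left]
  exact mul_nonneg (hc w) (h w (ht hw))

/-! ### pieceD / pol lemmas -/

lemma ind_nonneg (I0 : Set (E d)) (v : E d) : 0 ≤ ind I0 v :=
  Set.indicator_nonneg (fun _ _ => zero_le_one) v

lemma zero_mem_pieceD (A I0 : Set (E d)) : (0 : E d) ∈ pieceD A I0 := by
  intro v _
  rw [inner_zero_left]
  exact neg_nonpos.mpr (ind_nonneg I0 v)

lemma pieceD_convex (A I0 : Set (E d)) : Convex ℝ (pieceD A I0) := by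
  intro x hx y hy a b ha hb hab
  intro v hv
  have hx' := hx v hv
  have hy' := hy v hv
  have : (inner ℝ (a • x + b • y) v : ℝ) = a * inner ℝ x v + b * inner ℝ y v := by
    rw [inner_add_left, real_inner_smul_left, real_inner_smul_left]
  rw [this]
  have h1 := mul_le_mul_of_nonneg_left hx' ha
  have h2 := mul_le_mul_of_nonneg_left hy' hb
  have h3 : a * (-(ind I0 v)) + b * (-(ind I0 v)) = -(ind I0 v) := by
    rw [← add_mul, hab]; ring
  linarith

lemma pieceD_isClosed (A I0 : Set (E d)) : IsClosed (pieceD A I0) := by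
  have : pieceD A I0 = ⋂ v ∈ Vert (pol A), {m : E d | -(ind I0 v) ≤ (inner ℝ m v : ℝ)} := by
    ext m; simp [pieceD]
  rw [this]
  exact isClosed_biInter fun v _ =>
    isClosed_le continuous_const (Continuous.inner continuous_id continuous_const)

lemma pol_convex (A : Set (E d)) : Convex ℝ (pol A) := by
  intro x hx y hy a b ha hb hab
  intro w hw
  have hx' := hx w hw
  have hy' := hy w hw
  have : (inner ℝ w (a • x + b • y) : ℝ) = a * inner ℝ w x + b * inner ℝ w y := by
    rw [inner_add_right, real_inner_smul_right, real_inner_smul_right]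
  rw [this]
  have h1 := mul_le_mul_of_nonneg_left hx' ha
  have h2 := mul_le_mul_of_nonneg_left hy' hb
  have h3 : a * (-1 : ℝ) + b * (-1 : ℝ) = -1 := by rw [← add_mul, hab]; ring
  linarith

lemma pol_isClosed (A : Set (E d)) : IsClosed (pol A) := by
  have : pol A = ⋂ x ∈ A, {y : E d | (-1 : ℝ) ≤ (inner ℝ x y : ℝ)} := by
    ext y; simp [pol]
  rw [this]
  exact isClosed_biInter fun x _ =>
    isClosed_le continuous_const (Continuous.inner continuous_const continuous_id)



/-! ### compactness and interior lemmas -/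

lemma isCompact_of_isPolytope {A : Set (E d)} (h : IsPolytope A) : IsCompact A := by
  obtain ⟨F, rfl⟩ := h
  exact F.finite_toSet.isCompact_convexHull (𝕜 := ℝ)

lemma mem_sum_of_mem {P : Finset (Fin s)} {f : Fin s → Set (E d)}
    (h0 : ∀ j, (0 : E d) ∈ f j) {i : Fin s} (hi : i ∈ P) {x : E d} (hx : x ∈ f i) :
    x ∈ ∑ j ∈ P, f j := by
  classical
  rw [Set.mem_finset_sum]
  refine ⟨fun j => if j = i then x else 0, fun {j} _ => ?_, ?_⟩
  · by_cases h : j = i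
    · subst h; simpa using hx
    · simpa [h] using h0 j
  · rw [Finset.sum_ite_eq' P i (fun _ => x)]
    simp [hi]

lemma pieceD_subset_A {A : Set (E d)} {I : Fin s → Set (E d)} (hGNP : IsGNP A I) (i : Fin s) :
    pieceD A (I i) ⊆ A := by
  intro x hx
  rw [← hGNP.2.2.2]
  exact mem_sum_of_mem (fun j => zero_mem_pieceD A (I j)) (Finset.mem_univ i) hx

lemma pieceD_isCompact {A : Set (E d)} {I : Fin s → Set (E d)} (hGNP : IsGNP A I) (i : Fin s) :
    IsCompact (pieceD A (I i)) :=
  (isCompact_of_isPolytope hGNP.1).of_isClosed_subset (pieceD_isClosed A (I i))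
    (pieceD_subset_A hGNP i)

lemma pol_isCompact {A : Set (E d)} (hA : (0 : E d) ∈ interior A) : IsCompact (pol A) := by
  obtain ⟨ε, hε, hball⟩ := Metric.mem_nhds_iff.mp (mem_interior_iff_mem_nhds.mp hA)
  have hsub : pol A ⊆ Metric.closedBall 0 (2 / ε) := by
    intro y hy
    rw [Metric.mem_closedBall, dist_zero_right]
    by_cases hy0 : y = 0
    · simp only [hy0, norm_zero]
      positivity
    · have hny : (0 : ℝ) < ‖y‖ := norm_pos_iff.mpr hy0
      set x : E d := (-(ε / 2) * ‖y‖⁻¹) • y with hxdef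
      have hc : -(ε / 2) * ‖y‖⁻¹ ≤ 0 :=
        mul_nonpos_of_nonpos_of_nonneg (by linarith) (by positivity)
      have h1 : ‖y‖⁻¹ * ‖y‖ = 1 := inv_mul_cancel₀ hny.ne'
      have hx : x ∈ A := by
        apply hball
        rw [Metric.mem_ball, dist_zero_right, hxdef, norm_smul, Real.norm_eq_abs,
          abs_of_nonpos hc]
        nlinarith
      have hiny := hy x hx
      rw [hxdef, real_inner_smul_left, real_inner_self_eq_norm_sq] at hiny
      have h3 : (-(ε / 2) * ‖y‖⁻¹) * ‖y‖ ^ 2 = -(ε / 2 * ‖y‖) := by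
        field_simp
      rw [h3] at hiny
      rw [le_div_iff₀ hε]
      linarith
  exact (isCompact_closedBall 0 (2 / ε)).of_isClosed_subset (pol_isClosed A) hsub

lemma zero_mem_interior_pol {A : Set (E d)} (hA : IsCompact A) :
    (0 : E d) ∈ interior (pol A) := by
  obtain ⟨R, hR⟩ := hA.isBounded.subset_closedBall 0
  set R' : ℝ := max R 1 with hR'def
  have hR'pos : (0 : ℝ) < R' := lt_of_lt_of_le one_pos (le_max_right R 1)
  have hAR : A ⊆ Metric.closedBall 0 R' :=
    hR.trans (Metric.closedBall_subset_closedBall (le_max_left R 1))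
  rw [mem_interior]
  refine ⟨Metric.ball 0 R'⁻¹, ?_, Metric.isOpen_ball, Metric.mem_ball_self (by positivity)⟩
  intro y hyb x hx
  rw [Metric.mem_ball, dist_zero_right] at hyb
  have hxn : ‖x‖ ≤ R' := by
    have := hAR hx
    rwa [Metric.mem_closedBall, dist_zero_right] at this
  have habs : |(inner ℝ x y : ℝ)| ≤ ‖x‖ * ‖y‖ := abs_real_inner_le_norm x y
  have h2 : ‖x‖ * ‖y‖ ≤ R' * R'⁻¹ :=
    mul_le_mul hxn hyb.le (norm_nonneg y) hR'pos.le
  rw [mul_inv_cancel₀ hR'pos.ne'] at h2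
  have := abs_le.mp (habs.trans h2)
  linarith [this.1]

/-! ### intrinsic interior helper lemmas -/

lemma affineSpan_coe_eq_span {C : Set (E d)} (h0 : (0 : E d) ∈ C) :
    (affineSpan ℝ C : Set (E d)) = (Submodule.span ℝ C : Set (E d)) := by
  rw [← Set.insert_eq_self.mpr h0, affineSpan_insert_zero, Submodule.span_insert_zero]

lemma ball_of_mem_intrinsicInterior {C : Set (E d)} {y : E d}
    (hy : y ∈ intrinsicInterior ℝ C) :
    ∃ ε : ℝ, 0 < ε ∧ ∀ z : E d, z ∈ affineSpan ℝ C → dist z y < ε → z ∈ C := by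
  obtain ⟨y', hy', rfl⟩ := hy
  obtain ⟨ε, hε, hball⟩ := Metric.mem_nhds_iff.mp (mem_interior_iff_mem_nhds.mp hy')
  refine ⟨ε, hε, fun z hz hd => ?_⟩
  have : (⟨z, hz⟩ : affineSpan ℝ C) ∈ Metric.ball y' ε := by
    rw [Metric.mem_ball, Subtype.dist_eq]
    exact hd
  exact hball this

lemma exists_smul_mem {C : Set (E d)} (h0 : (0 : E d) ∈ intrinsicInterior ℝ C) {x : E d}
    (hx : x ∈ Submodule.span ℝ C) : ∃ ε : ℝ, 0 < ε ∧ ε • x ∈ C := by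
  have h0C : (0 : E d) ∈ C := intrinsicInterior_subset h0
  have hAff := affineSpan_coe_eq_span h0C
  obtain ⟨ε, hε, hball⟩ := ball_of_mem_intrinsicInterior h0
  set δ : ℝ := ε / (‖x‖ + 1) with hδdef
  have hδ : 0 < δ := by positivity
  refine ⟨δ, hδ, ?_⟩
  have hmem : δ • x ∈ affineSpan ℝ C := by
    rw [← SetLike.mem_coe, hAff]
    exact Submodule.smul_mem _ δ hx
  refine hball _ hmem ?_
  rw [dist_zero_right, norm_smul, Real.norm_eq_abs, abs_of_pos hδ]
  have hx1 : ‖x‖ < ‖x‖ + 1 := by linarith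
  calc δ * ‖x‖ < δ * (‖x‖ + 1) := by
        apply mul_lt_mul_of_pos_left _ hδ
        exact hx1
    _ = ε := by
        rw [hδdef]
        field_simp
  
lemma convex_subset_of_closure_eq {C : Set (E d)} (hconv : Convex ℝ C) (h0 : (0 : E d) ∈ C)
    {V : Submodule ℝ (E d)} (hCV : C ⊆ (V : Set (E d))) (hVC : (V : Set (E d)) ⊆ closure C) :
    (V : Set (E d)) ⊆ C := by
  have hspanV : Submodule.span ℝ C = V := by
    refine le_antisymm (Submodule.span_le.mpr hCV) ?_
    intro v hv
    have h1 : (V : Set (E d)) ⊆ (Submodule.span ℝ C : Set (E d)) := by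
      refine hVC.trans ?_
      rw [← (Submodule.span ℝ C).closed_of_finiteDimensional.closure_eq]
      exact closure_mono Submodule.subset_span
    exact h1 hv
  have hAff : (affineSpan ℝ C : Set (E d)) = (V : Set (E d)) := by
    rw [affineSpan_coe_eq_span h0, hspanV]
  obtain ⟨y, hy⟩ := Set.Nonempty.intrinsicInterior hconv ⟨0, h0⟩
  have hyC : y ∈ C := intrinsicInterior_subset hy
  obtain ⟨ε, hε, hball⟩ := ball_of_mem_intrinsicInterior hy
  intro x hxV
  set x' : E d := (2 : ℝ) • x - y with hx'def
  have hx'V : x' ∈ V := V.sub_mem (V.smul_mem 2 hxV) (hCV hyC)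
  have hx'cl : x' ∈ closure C := hVC hx'V
  obtain ⟨c, hcC, hdc⟩ := Metric.mem_closure_iff.mp hx'cl ε hε
  set y' : E d := y + (x' - c) with hy'def
  have hy'V : y' ∈ affineSpan ℝ C := by
    rw [← SetLike.mem_coe, hAff]
    exact V.add_mem (hCV hyC) (V.sub_mem hx'V (hCV hcC))
  have hy'C : y' ∈ C := by
    refine hball _ hy'V ?_
    rw [hy'def, dist_eq_norm]
    simpa [dist_eq_norm] using hdc
  have hcomb := hconv hy'C hcC (by norm_num : (0:ℝ) ≤ 1/2) (by norm_num : (0:ℝ) ≤ 1/2)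
    (by norm_num)
  have : (1/2 : ℝ) • y' + (1/2 : ℝ) • c = x := by
    rw [hy'def, hx'def]
    module
  rwa [this] at hcomb



/-! ### closure lemmas -/

lemma sum_mem_closure_coneOf {S : Set (E d)} {P : Finset (Fin s)} {g : Fin s → E d}
    (hg : ∀ i ∈ P, g i ∈ closure (coneOf S)) : ∑ i ∈ P, g i ∈ closure (coneOf S) := by
  classical
  induction P using Finset.induction_on with
  | empty => simpa using subset_closure (coneOf_zero_mem S)
  | insert _ _ hnot ih =>
    rename_i a t
    rw [Finset.sum_insert hnot]
    have h1 : g a ∈ closure (coneOf S) := hg a (Finset.mem_insert_self a t)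
    have h2 : ∑ i ∈ t, g i ∈ closure (coneOf S) :=
      ih fun i hi => hg i (Finset.mem_insert_of_mem hi)
    exact map_mem_closure₂ continuous_add h1 h2 fun x hx y hy => coneOf_add_mem hx hy

lemma smul_mem_closure_coneOf {S : Set (E d)} {r : ℝ} (hr : 0 ≤ r) {x : E d}
    (hx : x ∈ closure (coneOf S)) : r • x ∈ closure (coneOf S) := by
  have h1 : r • x ∈ (fun z : E d => r • z) '' closure (coneOf S) := ⟨x, hx, rfl⟩
  have h2 := image_closure_subset_closure_image (continuous_const_smul r) h1
  refine closure_mono ?_ h2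
  rintro w ⟨z, hz, rfl⟩
  exact coneOf_smul_mem hr hz

/-! ### inequality lemmas -/

lemma pieceD_inner_nonneg {A : Set (E d)} {I0 : Set (E d)} {m v : E d}
    (hm : m ∈ pieceD A I0) (hv : v ∈ Vert (pol A)) (hvI : v ∉ I0) : 0 ≤ (inner ℝ m v : ℝ) := by
  have := hm v hv
  rwa [ind, Set.indicator_of_notMem hvI, neg_zero] at this

lemma sum_pieceD_inner_nonneg {A : Set (E d)} {I : Fin s → Set (E d)}
    (hpart : IsVertPartition A I) {P : Finset (Fin s)} {m v : E d} {j : Fin s}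
    (hm : m ∈ ∑ i ∈ P, pieceD A (I i)) (hj : j ∉ P) (hv : v ∈ I j) : 0 ≤ (inner ℝ m v : ℝ) := by
  rw [Set.mem_finset_sum] at hm
  obtain ⟨g, hg, rfl⟩ := hm
  rw [sum_inner]
  refine Finset.sum_nonneg fun i hi => ?_
  refine pieceD_inner_nonneg (hg hi) (hpart.1 j hv) ?_
  intro hvi
  exact hj (((hpart.2 v (hpart.1 j hv)).unique hvi hv) ▸ hi)

/-- if `∑_{i∈A} Δ_i` contains `0` in its relative interior then the linear
span `V_A` meets the cone `C_B` only in the origin, and `C_A = V_A`. -/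
theorem span_inter_cone (A : Set (E d)) (I : Fin s → Set (E d)) (hGNP : IsGNP A I)
    (P : Finset (Fin s)) (hP : P.Nonempty) (hP' : P ≠ Finset.univ)
    (hrel : (0 : E d) ∈ intrinsicInterior ℝ (∑ i ∈ P, pieceD A (I i))) :
    ((Submodule.span ℝ (⋃ i ∈ (P : Set (Fin s)), pieceD A (I i)) : Set (E d)) ∩
        coneOf (⋃ i ∈ ((P : Set (Fin s)))ᶜ, Vert (pieceD A (I i))) = {(0 : E d)}) ∧
    coneOf (⋃ i ∈ (P : Set (Fin s)), Vert (pieceD A (I i))) =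
      (Submodule.span ℝ (⋃ i ∈ (P : Set (Fin s)), pieceD A (I i)) : Set (E d)) := by
  classical
  have hpoly := hGNP.1
  have hint := hGNP.2.1
  have hpart := hGNP.2.2.1
  set DP : Set (E d) := ∑ i ∈ P, pieceD A (I i) with hDP
  set U : Set (E d) := ⋃ i ∈ (P : Set (Fin s)), pieceD A (I i) with hU
  set V : Submodule ℝ (E d) := Submodule.span ℝ U with hV
  have hspan : Submodule.span ℝ DP = V := by
    refine le_antisymm (Submodule.span_le.mpr ?_) (Submodule.span_le.mpr ?_)
    · intro m hm
      rw [hDP, Set.mem_finset_sum] at hm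
      obtain ⟨g, hg, rfl⟩ := hm
      exact Submodule.sum_mem _ fun i hi => Submodule.subset_span
        (Set.mem_biUnion (Finset.mem_coe.mpr hi) (hg hi))
    · intro m hm
      rw [hU] at hm
      obtain ⟨i, hi, hmi⟩ := Set.mem_iUnion₂.mp hm
      exact Submodule.subset_span
        (mem_sum_of_mem (fun j => zero_mem_pieceD A (I j)) (Finset.mem_coe.mp hi) hmi)
  have h0DP : ∀ {x : E d}, x ∈ V → ∃ ε : ℝ, 0 < ε ∧ ε • x ∈ DP := by
    intro x hx
    exact exists_smul_mem hrel (by rwa [hspan])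
  have claimA : (V : Set (E d)) ∩
      coneOf (⋃ i ∈ ((P : Set (Fin s)))ᶜ, Vert (pieceD A (I i))) = {(0 : E d)} := by
    apply Set.eq_singleton_iff_unique_mem.mpr
    refine ⟨⟨V.zero_mem, coneOf_zero_mem _⟩, ?_⟩
    rintro x ⟨hxV, hxC⟩
    by_contra hx0
    have hge : ∀ v ∈ Vert (pol A), 0 ≤ (inner ℝ x v : ℝ) := by
      intro v hv
      obtain ⟨i, hvi, -⟩ := hpart.2 v hv
      by_cases hiP : i ∈ P
      · refine coneOf_inner_nonneg hxC ?_
        intro p hp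
        obtain ⟨j, hj, hpj⟩ := Set.mem_iUnion₂.mp hp
        have hjP : j ∉ P := by simpa using hj
        refine pieceD_inner_nonneg (extremePoints_subset hpj) hv ?_
        intro hvj
        exact hjP (((hpart.2 v hv).unique hvj hvi) ▸ hiP)
      · obtain ⟨ε, hε, hεx⟩ := h0DP hxV
        have h1 : (0:ℝ) ≤ inner ℝ (ε • x) v := sum_pieceD_inner_nonneg hpart hεx hiP hvi
        rw [real_inner_smul_left] at h1
        nlinarith
    have hpol : ∀ y ∈ pol A, 0 ≤ (inner ℝ x y : ℝ) := by
      have hKM := closure_convexHull_extremePoints (pol_isCompact hint) (pol_convex A)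
      have hT : convexHull ℝ (Set.extremePoints ℝ (pol A)) ⊆
          {y : E d | 0 ≤ (inner ℝ x y : ℝ)} := by
        apply convexHull_min
        · exact hge
        · intro y1 hy1 y2 hy2 a b ha hb hab
          simp only [Set.mem_setOf_eq] at hy1 hy2 ⊢
          have heq : (inner ℝ x (a • y1 + b • y2) : ℝ) = a * inner ℝ x y1 + b * inner ℝ x y2 := by
            rw [inner_add_right, real_inner_smul_right, real_inner_smul_right]
          rw [heq]
          exact add_nonneg (mul_nonneg ha hy1) (mul_nonneg hb hy2)
      have hclosed : IsClosed {y : E d | 0 ≤ (inner ℝ x y : ℝ)} :=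
        isClosed_le continuous_const (Continuous.inner continuous_const continuous_id)
      intro y hy
      rw [← hKM] at hy
      exact ((closure_mono hT).trans hclosed.closure_eq.subset) hy
    obtain ⟨δ, hδ, hball⟩ := Metric.mem_nhds_iff.mp (mem_interior_iff_mem_nhds.mp
      (zero_mem_interior_pol (isCompact_of_isPolytope hpoly)))
    have hnx : (0:ℝ) < ‖x‖ := norm_pos_iff.mpr hx0
    set y0 : E d := (-(δ/2) * ‖x‖⁻¹) • x with hy0def
    have hy0 : y0 ∈ pol A := by
      apply hball
      rw [Metric.mem_ball, dist_zero_right, hy0def, norm_smul, Real.norm_eq_abs,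
        abs_of_nonpos (mul_nonpos_of_nonpos_of_nonneg (by linarith) (by positivity))]
      have h1 : ‖x‖⁻¹ * ‖x‖ = 1 := inv_mul_cancel₀ hnx.ne'
      nlinarith
    have hfin := hpol y0 hy0
    rw [hy0def, real_inner_smul_right, real_inner_self_eq_norm_sq] at hfin
    have h1 : ‖x‖⁻¹ * ‖x‖ ^ 2 = ‖x‖ := by
      field_simp
    nlinarith
  refine ⟨claimA, ?_⟩
  have hVertSub : (⋃ i ∈ (P : Set (Fin s)), Vert (pieceD A (I i))) ⊆ (V : Set (E d)) := by
    intro p hp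
    obtain ⟨i, hi, hpi⟩ := Set.mem_iUnion₂.mp hp
    exact Submodule.subset_span (Set.mem_biUnion hi (extremePoints_subset hpi))
  set CA := coneOf (⋃ i ∈ (P : Set (Fin s)), Vert (pieceD A (I i))) with hCA
  have hCV : CA ⊆ (V : Set (E d)) := coneOf_subset_span hVertSub
  have hDPsub : DP ⊆ closure CA := by
    intro m hm
    rw [hDP, Set.mem_finset_sum] at hm
    obtain ⟨g, hg, rfl⟩ := hm
    apply sum_mem_closure_coneOf
    intro i hi
    have hKM := closure_convexHull_extremePoints (pieceD_isCompact hGNP i)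
      (pieceD_convex A (I i))
    have hgi : g i ∈ closure (convexHull ℝ (Set.extremePoints ℝ (pieceD A (I i)))) := by
      rw [hKM]
      exact hg hi
    refine closure_mono ?_ hgi
    refine (convexHull_subset_coneOf _).trans (coneOf_mono ?_)
    exact Set.subset_biUnion_of_mem (u := fun j => Vert (pieceD A (I j))) (Finset.mem_coe.mpr hi)
  have hVC : (V : Set (E d)) ⊆ closure CA := by
    intro x hx
    obtain ⟨ε, hε, hεx⟩ := h0DP hx
    have h1 : ε • x ∈ closure CA := hDPsub hεx
    have h2 := smul_mem_closure_coneOf (le_of_lt (inv_pos.mpr hε)) h1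
    rwa [smul_smul, inv_mul_cancel₀ hε.ne', one_smul] at h2
  exact Set.Subset.antisymm hCV
    (convex_subset_of_closure_eq (coneOf_convex _) (coneOf_zero_mem _) hCV hVC)


end GNPPaper
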